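/- Let σ₀ > 0, τ ∈ ℝ, and set σ = −σ₀ + iτ. Then for all real s ≥ 0 and λ ≥ 0: | (3σ³ − λσ² − σs² − λs² + 6σ²s − 6λσs) / ( 4(σ − λ)³(σ − s)³ ) | ≤ 3λ²/(2(σ₀² + τ²)^{5/2}) + 11λ/(4(σ₀² + τ²)²) + 13/(8(σ₀² + τ²)^{3/2}). -/

import Mathlib

/-!
For `Re σ ≤ 0` and real `x ≥ 0` one has `|σ - x|² ≥ |σ|² + x²`, so both `|σ - λ|` and `|σ - s|`
are at least `r = |σ|`. Bounding the numerator termwise gives `(r + λ)(r² + 6rs + s²) + 2r³`, and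
`r² + 6rs + s² ≤ 4(r² + s²) ≤ 4|σ - s|²` cancels against the denominator, leaving
`|Q₂| ≤ 3/(2r³) + λ/r⁴`, which is sharper than the stated bound.
-/

open Complex Real

noncomputable def Q₂ (σ lam s : ℂ) : ℂ :=
  (3 * σ ^ 3 - lam * σ ^ 2 - σ * s ^ 2 - lam * s ^ 2 + 6 * σ ^ 2 * s - 6 * lam * σ * s) /
    (4 * (σ - lam) ^ 3 * (σ - s) ^ 3)

lemma norm_sq_add_sq_le_norm_sub_ofReal_sq {z : ℂ} (hz : z.re ≤ 0) {x : ℝ} (hx : 0 ≤ x) :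
    ‖z‖ ^ 2 + x ^ 2 ≤ ‖z - x‖ ^ 2 := by
  simp only [Complex.sq_norm, Complex.normSq_apply, sub_re, sub_im, ofReal_re, ofReal_im]
  nlinarith

lemma norm_le_norm_sub_ofReal {z : ℂ} (hz : z.re ≤ 0) {x : ℝ} (hx : 0 ≤ x) :
    ‖z‖ ≤ ‖z - x‖ :=
  (pow_le_pow_iff_left₀ (norm_nonneg _) (norm_nonneg _) two_ne_zero).1 <| by
    nlinarith [norm_sq_add_sq_le_norm_sub_ofReal_sq hz hx]

lemma norm_Q₂_numerator_le (σ : ℂ) {lam s : ℝ} (hlam : 0 ≤ lam) (hs : 0 ≤ s) :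
    ‖3 * σ ^ 3 - (lam : ℂ) * σ ^ 2 - σ * (s : ℂ) ^ 2 - (lam : ℂ) * (s : ℂ) ^ 2 +
        6 * σ ^ 2 * (s : ℂ) - 6 * (lam : ℂ) * σ * (s : ℂ)‖ ≤
      (‖σ‖ + lam) * (‖σ‖ ^ 2 + 6 * ‖σ‖ * s + s ^ 2) + 2 * ‖σ‖ ^ 3 := by
  calc _ ≤ ‖3 * σ ^ 3‖ + ‖(lam : ℂ) * σ ^ 2‖ + ‖σ * (s : ℂ) ^ 2‖ + ‖(lam : ℂ) * (s : ℂ) ^ 2‖ +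
          ‖6 * σ ^ 2 * (s : ℂ)‖ + ‖6 * (lam : ℂ) * σ * (s : ℂ)‖ := by
        refine (norm_sub_le _ _).trans ?_; gcongr
        refine (norm_add_le _ _).trans ?_; gcongr
        refine (norm_sub_le _ _).trans ?_; gcongr
        refine (norm_sub_le _ _).trans ?_; gcongr
        exact norm_sub_le _ _
    _ = _ := by
        simp only [norm_mul, norm_pow, norm_real, Real.norm_of_nonneg hlam,
          Real.norm_of_nonneg hs, RCLike.norm_ofNat]
        ring

lemma Q₂_majorant_le {r s lam P Q : ℝ} (hr : 0 < r) (hlam : 0 ≤ lam)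
    (hP : r ^ 2 + s ^ 2 ≤ P ^ 2) (hP0 : 0 ≤ P) (hQ : r ≤ Q) :
    ((r + lam) * (r ^ 2 + 6 * r * s + s ^ 2) + 2 * r ^ 3) / (4 * Q ^ 3 * P ^ 3) ≤
      3 / (2 * r ^ 3) + lam / r ^ 4 := by
  have hrP : r ≤ P := by nlinarith
  have hPpos : 0 < P := hr.trans_le hrP
  have hQpos : 0 < Q := hr.trans_le hQ
  have hmixed : r ^ 2 + 6 * r * s + s ^ 2 ≤ 4 * P ^ 2 := by nlinarith [sq_nonneg (r - s)]
  have h₁ : (r + lam) * (r ^ 2 + 6 * r * s + s ^ 2) / (4 * Q ^ 3 * P ^ 3) ≤ (r + lam) / r ^ 4 := by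
    rw [div_le_div_iff₀ (by positivity) (by positivity)]
    calc (r + lam) * (r ^ 2 + 6 * r * s + s ^ 2) * r ^ 4
        ≤ (r + lam) * (4 * P ^ 2) * (r ^ 3 * r) := by rw [← pow_succ]; gcongr
      _ ≤ (r + lam) * (4 * P ^ 2) * (Q ^ 3 * P) := by gcongr
      _ = (r + lam) * (4 * Q ^ 3 * P ^ 3) := by ring
  have h₂ : 2 * r ^ 3 / (4 * Q ^ 3 * P ^ 3) ≤ 1 / (2 * r ^ 3) := by
    rw [div_le_div_iff₀ (by positivity) (by positivity)]
    calc 2 * r ^ 3 * (2 * r ^ 3) = 4 * r ^ 3 * r ^ 3 := by ring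
      _ ≤ 4 * Q ^ 3 * P ^ 3 := by gcongr
      _ = 1 * (4 * Q ^ 3 * P ^ 3) := by ring
  calc _ = (r + lam) * (r ^ 2 + 6 * r * s + s ^ 2) / (4 * Q ^ 3 * P ^ 3) +
        2 * r ^ 3 / (4 * Q ^ 3 * P ^ 3) := add_div _ _ _
    _ ≤ (r + lam) / r ^ 4 + 1 / (2 * r ^ 3) := add_le_add h₁ h₂
    _ = 3 / (2 * r ^ 3) + lam / r ^ 4 := by field_simp; ring

lemma norm_Q₂_le {σ : ℂ} (hσ : σ.re ≤ 0) (hσ0 : σ ≠ 0) {lam s : ℝ} (hlam : 0 ≤ lam)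
    (hs : 0 ≤ s) :
    ‖Q₂ σ lam s‖ ≤ 3 / (2 * ‖σ‖ ^ 3) + lam / ‖σ‖ ^ 4 := by
  rw [Q₂, norm_div, norm_mul, norm_mul, norm_pow, norm_pow, RCLike.norm_ofNat]
  exact (div_le_div_of_nonneg_right (norm_Q₂_numerator_le σ hlam hs) (by positivity)).trans
    (Q₂_majorant_le (norm_pos_iff.2 hσ0) hlam (norm_sq_add_sq_le_norm_sub_ofReal_sq hσ hs)
      (norm_nonneg _) (norm_le_norm_sub_ofReal hσ hlam))

lemma sq_rpow_natCast_div_two {r : ℝ} (hr : 0 ≤ r) (n : ℕ) : (r ^ 2) ^ ((n : ℝ) / 2) = r ^ n := by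
  rw [Real.rpow_div_two_eq_sqrt _ (by positivity), Real.sqrt_sq hr, Real.rpow_natCast]

theorem stmt_19 (σ₀ τ : ℝ) (hσ₀ : 0 < σ₀) (σ : ℂ) (hσ : σ = -(σ₀ : ℂ) + (τ : ℂ) * Complex.I)
    (s lam : ℝ) (hs : 0 ≤ s) (hlam : 0 ≤ lam) :
    ‖(3 * σ ^ 3 - (lam : ℂ) * σ ^ 2 - σ * (s : ℂ) ^ 2 - (lam : ℂ) * (s : ℂ) ^ 2 +
          6 * σ ^ 2 * (s : ℂ) - 6 * (lam : ℂ) * σ * (s : ℂ)) /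
        (4 * (σ - (lam : ℂ)) ^ 3 * (σ - (s : ℂ)) ^ 3)‖ ≤
      3 * lam ^ 2 / (2 * (σ₀ ^ 2 + τ ^ 2) ^ ((5 : ℝ) / 2)) +
        11 * lam / (4 * (σ₀ ^ 2 + τ ^ 2) ^ 2) +
        13 / (8 * (σ₀ ^ 2 + τ ^ 2) ^ ((3 : ℝ) / 2)) := by
  have hre : σ.re = -σ₀ := by simp [hσ]
  have hnorm : σ₀ ^ 2 + τ ^ 2 = ‖σ‖ ^ 2 := by
    rw [Complex.sq_norm, Complex.normSq_apply, hre, show σ.im = τ by simp [hσ]]; ring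
  have hσ0 : σ ≠ 0 := fun h => by simp [h] at hre; linarith
  have hr : 0 < ‖σ‖ := norm_pos_iff.2 hσ0
  have h₃ := sq_rpow_natCast_div_two hr.le 3
  have h₅ := sq_rpow_natCast_div_two hr.le 5
  push_cast at h₃ h₅
  rw [hnorm, h₃, h₅, ← pow_mul]
  calc _ ≤ 3 / (2 * ‖σ‖ ^ 3) + lam / ‖σ‖ ^ 4 := norm_Q₂_le (by linarith) hσ0 hlam hs
    _ ≤ _ := by
      have hquad : 0 ≤ 3 * lam ^ 2 / (2 * ‖σ‖ ^ 5) := by positivity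
      have hlin : lam / ‖σ‖ ^ 4 ≤ 11 * lam / (4 * ‖σ‖ ^ 4) := by
        rw [div_le_div_iff₀ (by positivity) (by positivity)]; nlinarith [pow_pos hr 4]
      have hconst : 3 / (2 * ‖σ‖ ^ 3) ≤ 13 / (8 * ‖σ‖ ^ 3) := by
        rw [div_le_div_iff₀ (by positivity) (by positivity)]; nlinarith [pow_pos hr 3]
      linarith
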